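/- arXiv:1704.03111 — 3 statements merged into one kernel-verified Lean document; each statement's English description precedes it below -/
import Mathlib

section
/- Let V be a ℤ-graded vector space over a field of characteristic 0, let {m_b}_{b≥0} be a family of graded symmetric multilinear maps each homogeneous of degree +1, and {n_b}_{b≥0} a family of graded symmetric multilinear maps each homogeneous of degree −1. Then (V,{m_b},{n_b}) is a blended L∞-algebra (i.e. all Jacobiators of the combined family {m_b + n_b} vanish) if and only if: (V,{m_b}) is a positive L∞-algebra, (V,{n_b}) is a negative L∞-algebra, and for every n ≥ 1 and all homogeneous v₁,…,v_n ∈ V the mixed compatibility equation Σ_{i+j=n+1} Σ_{τ∈S_{j,n−j}} e(τ)[ m_i(n_j(v_{τ(1)},…,v_{τ(j)}), v_{τ(j+1)},…,v_{τ(n)}) + n_i(m_j(v_{τ(1)},…,v_{τ(j)}), v_{τ(j+1)},…,v_{τ(n)}) ] = 0 holds. -/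
noncomputable section

/-- The sign `(−1)^n` as an element of `k`. -/
def gsign (k : Type*) [Field k] (n : ℤ) : k := if Even n then 1 else -1

/-- The Koszul sign `e(τ)` of a permutation `τ` with respect to degrees `d` of the
arguments: the product over the inversions of `τ` of the signs `(−1)^{|v_i||v_j|}`. -/
def koszulSign (k : Type*) [Field k] {n : ℕ} (d : Fin n → ℤ) (τ : Equiv.Perm (Fin n)) : k :=
  ∏ p ∈ Finset.univ.filter (fun p : Fin n × Fin n => p.1 < p.2 ∧ τ p.2 < τ p.1),
    gsign k (d (τ p.1) * d (τ p.2))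

/-- The set of `(j, n−j)`-shuffles: permutations of `Fin n` that are increasing on the
first `j` indices and on the last `n − j` indices. -/
def shuffles (j n : ℕ) : Finset (Equiv.Perm (Fin n)) :=
  Finset.univ.filter fun τ =>
    (∀ p q : Fin n, p.1 < j → q.1 < j → p < q → τ p < τ q) ∧
    (∀ p q : Fin n, j ≤ p.1 → j ≤ q.1 → p < q → τ p < τ q)

/-- The mixed Jacobiator-type expression
`Σ_{i+j=n+1} Σ_{τ∈S_{j,n−j}} e(τ) F_i(G_j(v_{τ(1)},…,v_{τ(j)}), v_{τ(j+1)},…,v_{τ(n)})`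
associated with two families `F, G` of `b`-ary operations, evaluated at arguments `v`
of degrees `d`. -/
def jacobiator2 (k : Type*) [Field k] {V : Type*} [AddCommGroup V] [Module k V]
    (F G : ∀ b : ℕ, (Fin b → V) → V) (n : ℕ) (d : Fin n → ℤ) (v : Fin n → V) : V :=
  ∑ j : Fin (n + 1), ∑ τ ∈ shuffles j.1 n,
    koszulSign k d τ •
      F (n - j.1 + 1)
        (Fin.cons
          (G j.1 (fun p => v (τ (Fin.castLE (Nat.lt_succ_iff.mp j.isLt) p))))
          (fun p : Fin (n - j.1) => v (τ ⟨j.1 + p.1, by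
            have h1 := p.isLt; have h2 := Nat.lt_succ_iff.mp j.isLt; omega⟩)))

/-- The Jacobiator of the family `F`. -/
def jacobiator (k : Type*) [Field k] {V : Type*} [AddCommGroup V] [Module k V]
    (F : ∀ b : ℕ, (Fin b → V) → V) (n : ℕ) (d : Fin n → ℤ) (v : Fin n → V) : V :=
  jacobiator2 k F F n d v

/-- A `b`-ary multilinear map is graded symmetric if exchanging adjacent homogeneous
arguments produces the Koszul sign. -/
def IsGradedSymmetric {k V : Type*} [Field k] [AddCommGroup V] [Module k V]
    (grading : ℤ → Submodule k V) {b : ℕ}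
    (m : MultilinearMap k (fun _ : Fin b => V) V) : Prop :=
  ∀ (d : Fin b → ℤ) (v : Fin b → V), (∀ p, v p ∈ grading (d p)) →
    ∀ i j : Fin b, i.1 + 1 = j.1 →
      m (v ∘ Equiv.swap i j) = gsign k (d i * d j) • m v

/-- A `b`-ary multilinear map is homogeneous of degree `r` if it raises total degree by `r`. -/
def IsHomogeneousOfDegree {k V : Type*} [Field k] [AddCommGroup V] [Module k V]
    (grading : ℤ → Submodule k V) (r : ℤ) {b : ℕ}
    (m : MultilinearMap k (fun _ : Fin b => V) V) : Prop :=
  ∀ (d : Fin b → ℤ) (v : Fin b → V), (∀ p, v p ∈ grading (d p)) →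
    m v ∈ grading (r + ∑ p, d p)


set_option linter.unusedSectionVars false
set_option synthInstance.maxHeartbeats 1000000
set_option maxHeartbeats 1000000

section Aux

variable {k V : Type*} [Field k] [CharZero k] [AddCommGroup V] [Module k V]

lemma three_indep (grading : ℤ → Submodule k V) (hInt : DirectSum.IsInternal grading)
    {a b c : ℤ} (hab : a ≠ b) (hac : a ≠ c) (hbc : b ≠ c)
    {x y z : V} (hx : x ∈ grading a) (hy : y ∈ grading b) (hz : z ∈ grading c)
    (h : x + y + z = 0) : x = 0 ∧ y = 0 ∧ z = 0 := by
  classical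
  set w : DirectSum ℤ (fun i => ↥(grading i)) :=
    DirectSum.of (fun i => ↥(grading i)) a ⟨x, hx⟩ + DirectSum.of (fun i => ↥(grading i)) b ⟨y, hy⟩
      + DirectSum.of (fun i => ↥(grading i)) c ⟨z, hz⟩ with hw
  have hw0 : w = 0 := by
    apply hInt.injective
    rw [map_zero, hw, AddMonoidHom.map_add, AddMonoidHom.map_add, DirectSum.coeAddMonoidHom_of,
      DirectSum.coeAddMonoidHom_of, DirectSum.coeAddMonoidHom_of]
    exact h
  have ha := congrArg (fun u : DirectSum ℤ (fun i => ↥(grading i)) => u a) hw0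
  have hb := congrArg (fun u : DirectSum ℤ (fun i => ↥(grading i)) => u b) hw0
  have hc := congrArg (fun u : DirectSum ℤ (fun i => ↥(grading i)) => u c) hw0
  simp only [hw, DirectSum.add_apply, DirectSum.of_eq_same,
    DirectSum.of_eq_of_ne _ _ _ hab.symm, DirectSum.of_eq_of_ne _ _ _ hac.symm,
    DirectSum.of_eq_of_ne _ _ _ hab, DirectSum.of_eq_of_ne _ _ _ hbc.symm,
    DirectSum.of_eq_of_ne _ _ _ hac, DirectSum.of_eq_of_ne _ _ _ hbc,
    add_zero, zero_add, DirectSum.zero_apply] at ha hb hc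
  exact ⟨congrArg Subtype.val ha, congrArg Subtype.val hb, congrArg Subtype.val hc⟩

lemma sum_split {n j : ℕ} (hj : j ≤ n) (g : Fin n → ℤ) :
    (∑ p : Fin j, g (Fin.castLE hj p)) +
      (∑ p : Fin (n - j), g ⟨j + p.1, by omega⟩) = ∑ p, g p := by
  have h : j + (n - j) = n := by omega
  calc (∑ p : Fin j, g (Fin.castLE hj p)) + (∑ p : Fin (n - j), g ⟨j + p.1, by omega⟩)
      = (∑ p : Fin j, g (finCongr h (Fin.castAdd (n - j) p)))
        + ∑ p : Fin (n - j), g (finCongr h (Fin.natAdd j p)) := by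
        congr 1 <;> exact Finset.sum_congr rfl fun p _ => by congr 1; exact Fin.ext rfl
    _ = ∑ p : Fin (j + (n - j)), g (finCongr h p) := (Fin.sum_univ_add (fun p => g (finCongr h p))).symm
    _ = ∑ p, g p := Fintype.sum_equiv (finCongr h) _ _ fun p => rfl

lemma jac2_mem (grading : ℤ → Submodule k V) (rF rG : ℤ)
    (F G : ∀ b : ℕ, MultilinearMap k (fun _ : Fin b => V) V)
    (hF : ∀ b, IsHomogeneousOfDegree grading rF (F b))
    (hG : ∀ b, IsHomogeneousOfDegree grading rG (G b))
    (n : ℕ) (d : Fin n → ℤ) (v : Fin n → V) (hv : ∀ p, v p ∈ grading (d p)) :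
    jacobiator2 k (fun b => ⇑(F b)) (fun b => ⇑(G b)) n d v
      ∈ grading (rF + rG + ∑ p, d p) := by
  unfold jacobiator2
  refine Submodule.sum_mem _ fun j _ => Submodule.sum_mem _ fun τ _ => Submodule.smul_mem _ _ ?_
  have hj : j.1 ≤ n := Nat.lt_succ_iff.mp j.isLt
  set d' : Fin (n - j.1 + 1) → ℤ :=
    Fin.cons (rG + ∑ p : Fin j.1, d (τ (Fin.castLE hj p)))
      (fun p : Fin (n - j.1) => d (τ ⟨j.1 + p.1, by omega⟩)) with hd'
  have hmem : (F (n - j.1 + 1))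
      (Fin.cons (G j.1 (fun p => v (τ (Fin.castLE hj p))))
        (fun p : Fin (n - j.1) => v (τ ⟨j.1 + p.1, by
          have h1 := p.isLt; have h2 := hj; omega⟩))) ∈ grading (rF + ∑ p, d' p) := by
    apply hF (n - j.1 + 1) d'
    intro p
    refine Fin.cases ?_ ?_ p
    · exact hG j.1 (fun p => d (τ (Fin.castLE hj p))) _ (fun p => hv _)
    · intro q
      simpa [hd'] using hv (τ ⟨j.1 + q.1, by omega⟩)
  have hsum : rF + ∑ p, d' p = rF + rG + ∑ p, d p := by
    rw [hd', Fin.sum_cons]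
    have key := (sum_split hj (fun p => d (τ p))).trans (Equiv.sum_comp τ d)
    linarith [key]
  rw [← hsum]
  exact hmem

lemma jac_add (mm nn : ∀ b : ℕ, MultilinearMap k (fun _ : Fin b => V) V)
    (n : ℕ) (d : Fin n → ℤ) (v : Fin n → V) :
    jacobiator k (fun b => ⇑(mm b + nn b)) n d v =
      jacobiator k (fun b => ⇑(mm b)) n d v + jacobiator k (fun b => ⇑(nn b)) n d v
        + (jacobiator2 k (fun b => ⇑(mm b)) (fun b => ⇑(nn b)) n d v
            + jacobiator2 k (fun b => ⇑(nn b)) (fun b => ⇑(mm b)) n d v) := by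
  simp only [jacobiator, jacobiator2, MultilinearMap.add_apply, MultilinearMap.cons_add,
    smul_add, Finset.sum_add_distrib]
  abel

end Aux

/-- for families `{m_b}` (graded symmetric, degree `+1`) and `{n_b}` (graded
symmetric, degree `−1`) of multilinear maps on a ℤ-graded vector space over a field of
characteristic zero, `(V,{m_b},{n_b})` is a blended `L∞`-algebra (all Jacobiators of the
combined family `{m_b + n_b}` vanish on homogeneous arguments) if and only if `(V,{m_b})`
is a positive `L∞`-algebra, `(V,{n_b})` is a negative `L∞`-algebra, and the mixed
compatibility equations hold. -/
theorem blended_Linfty_iff {k V : Type*} [Field k] [CharZero k]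
    [AddCommGroup V] [Module k V]
    (grading : ℤ → Submodule k V) (hInt : DirectSum.IsInternal grading)
    (mm nn : ∀ b : ℕ, MultilinearMap k (fun _ : Fin b => V) V)
    (hmmSym : ∀ b, IsGradedSymmetric grading (mm b))
    (hnnSym : ∀ b, IsGradedSymmetric grading (nn b))
    (hmmDeg : ∀ b, IsHomogeneousOfDegree grading 1 (mm b))
    (hnnDeg : ∀ b, IsHomogeneousOfDegree grading (-1) (nn b)) :
    (∀ n : ℕ, 1 ≤ n → ∀ (d : Fin n → ℤ) (v : Fin n → V), (∀ p, v p ∈ grading (d p)) →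
        jacobiator k (fun b => ⇑(mm b + nn b)) n d v = 0) ↔
      ((∀ n : ℕ, 1 ≤ n → ∀ (d : Fin n → ℤ) (v : Fin n → V), (∀ p, v p ∈ grading (d p)) →
          jacobiator k (fun b => ⇑(mm b)) n d v = 0) ∧
       (∀ n : ℕ, 1 ≤ n → ∀ (d : Fin n → ℤ) (v : Fin n → V), (∀ p, v p ∈ grading (d p)) →
          jacobiator k (fun b => ⇑(nn b)) n d v = 0) ∧
       (∀ n : ℕ, 1 ≤ n → ∀ (d : Fin n → ℤ) (v : Fin n → V), (∀ p, v p ∈ grading (d p)) →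
          jacobiator2 k (fun b => ⇑(mm b)) (fun b => ⇑(nn b)) n d v
            + jacobiator2 k (fun b => ⇑(nn b)) (fun b => ⇑(mm b)) n d v = 0)) := by
  have key : ∀ (n : ℕ) (d : Fin n → ℤ) (v : Fin n → V), (∀ p, v p ∈ grading (d p)) →
      jacobiator k (fun b => ⇑(mm b)) n d v ∈ grading (1 + 1 + ∑ p, d p) ∧
      jacobiator k (fun b => ⇑(nn b)) n d v ∈ grading (-1 + -1 + ∑ p, d p) ∧
      (jacobiator2 k (fun b => ⇑(mm b)) (fun b => ⇑(nn b)) n d v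
        + jacobiator2 k (fun b => ⇑(nn b)) (fun b => ⇑(mm b)) n d v)
          ∈ grading (1 + -1 + ∑ p, d p) := by
    intro n d v hv
    refine ⟨jac2_mem grading 1 1 mm mm hmmDeg hmmDeg n d v hv,
      jac2_mem grading (-1) (-1) nn nn hnnDeg hnnDeg n d v hv,
      Submodule.add_mem _ (jac2_mem grading 1 (-1) mm nn hmmDeg hnnDeg n d v hv) ?_⟩
    have e : (-1 : ℤ) + 1 + ∑ p, d p = 1 + -1 + ∑ p, d p := by ring
    exact e ▸ jac2_mem grading (-1) 1 nn mm hnnDeg hmmDeg n d v hv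
  constructor
  · intro H
    refine ⟨fun n hn d v hv => ?_, fun n hn d v hv => ?_, fun n hn d v hv => ?_⟩
    all_goals {
      have h0 := H n hn d v hv
      rw [jac_add] at h0
      obtain ⟨hA, hB, hC⟩ := key n d v hv
      have h3 := three_indep grading hInt (a := 1 + 1 + ∑ p, d p) (b := -1 + -1 + ∑ p, d p)
        (c := 1 + -1 + ∑ p, d p) (by omega) (by omega) (by omega) hA hB hC h0
      first
      | exact h3.1
      | exact h3.2.1
      | exact h3.2.2
    }
  · rintro ⟨H1, H2, H3⟩ n hn d v hv
    rw [jac_add, H1 n hn d v hv, H2 n hn d v hv, H3 n hn d v hv]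
    simp
end
end

section
/- Let (V,[·,·],𝔞,P) be a V-algebra over a field of characteristic 0 and let Δ = Δ₊ + Δ₋ with Δ₊ ∈ V₁ and Δ₋ ∈ V₋₁ (not assumed to satisfy [Δ,Δ] = 0). Then for every n ≥ 1 and all homogeneous a₁,…,a_n ∈ 𝔞, the n-th Jacobiator of the family of higher derived brackets of Δ coincides with the n-th higher derived bracket of (1/2)[Δ,Δ]; that is, J_n(a₁,…,a_n) = (1/2) P[⋯[[[Δ,Δ],a₁],a₂],⋯,a_n]. -/
noncomputable section

/-- A ℤ-graded Lie algebra over `k`: a ℤ-graded vector space `V = ⊕ₙ Vₙ` together with a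
bilinear bracket of degree `0` that is graded antisymmetric and satisfies the graded
Jacobi identity (on homogeneous elements). -/
structure ZGradedLieAlgebra (k V : Type*) [Field k] [AddCommGroup V] [Module k V] where
  grading : ℤ → Submodule k V
  isInternal : DirectSum.IsInternal grading
  bracket : V →ₗ[k] V →ₗ[k] V
  bracket_mem : ∀ (i j : ℤ) (a b : V), a ∈ grading i → b ∈ grading j →
    bracket a b ∈ grading (i + j)
  bracket_antisymm : ∀ (i j : ℤ) (a b : V), a ∈ grading i → b ∈ grading j →
    bracket a b = - (gsign k (i * j) • bracket b a)
  bracket_jacobi : ∀ (i j l : ℤ) (a b c : V), a ∈ grading i → b ∈ grading j → c ∈ grading l →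
    bracket a (bracket b c) =
      bracket (bracket a b) c + gsign k (i * j) • bracket b (bracket a c)

/-- A submodule is a graded subspace of the graded vector space `(V, grading)` if it is the
(internal) sum of its homogeneous components. -/
def IsGradedSubspace {k V : Type*} [Field k] [AddCommGroup V] [Module k V]
    (grading : ℤ → Submodule k V) (W : Submodule k V) : Prop :=
  W = ⨆ i : ℤ, W ⊓ grading i

/-- The iterated bracket `[⋯[[Δ,a₁],a₂],⋯,a_b]`. -/
def iterBr (k : Type*) [Field k] {V : Type*} [AddCommGroup V] [Module k V]
    (bk : V →ₗ[k] V →ₗ[k] V) (Δ : V) : (b : ℕ) → (Fin b → V) → V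
  | 0, _ => Δ
  | b + 1, a => bk (iterBr k bk Δ b (fun p => a p.castSucc)) (a (Fin.last b))

section GsignLemmas
variable (k : Type*) [Field k]

lemma gsign_even {n : ℤ} (h : Even n) : gsign k n = 1 := if_pos h

lemma gsign_add (a b : ℤ) : gsign k (a + b) = gsign k a * gsign k b := by
  unfold gsign
  by_cases ha : Even a <;> by_cases hb : Even b <;>
    simp [ha, hb, Int.even_add, iff_iff_implies_and_implies] <;> tauto

lemma gsign_sq (a : ℤ) : gsign k a * gsign k a = 1 := by
  rw [← gsign_add, gsign_even]
  exact Even.add_self a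

lemma gsign_eq_of_even_sub {a b : ℤ} (h : Even (a - b)) : gsign k a = gsign k b := by
  unfold gsign
  rw [Int.even_sub] at h
  by_cases hb : Even b <;> simp [hb, h.2, h.1, iff_iff_implies_and_implies] <;> tauto

lemma gsign_neg_one : gsign k (-1) = -1 := by
  unfold gsign; norm_num

lemma gsign_one_add (a : ℤ) : gsign k (1 + a) = - gsign k a := by
  rw [gsign_add]; unfold gsign; norm_num
  by_cases h : Even a <;> simp [h]

lemma gsign_sum {ι : Type*} (s : Finset ι) (f : ι → ℤ) :
    gsign k (∑ i ∈ s, f i) = ∏ i ∈ s, gsign k (f i) := by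
  classical
  induction s using Finset.induction_on with
  | empty => simp [gsign_even]
  | insert a s' h ih => rw [Finset.sum_insert h, Finset.prod_insert h, gsign_add, ih]

lemma gsign_mul_comm (a b : ℤ) : gsign k (a * b) = gsign k (b * a) := by rw [mul_comm]

/-- parity congruence for products -/
lemma gsign_mul_congr {a b a' b' : ℤ} (ha : Even (a - a')) (hb : Even (b - b')) :
    gsign k (a * b) = gsign k (a' * b') := by
  apply gsign_eq_of_even_sub
  have : a * b - a' * b' = (a - a') * b + a' * (b - b') := by ring
  rw [this]
  exact Even.add (ha.mul_right b) (hb.mul_left a')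

end GsignLemmas


namespace ZGradedLieAlgebra
variable {k V : Type*} [Field k] [AddCommGroup V] [Module k V] (L : ZGradedLieAlgebra k V)

/-- The submodule of elements whose homogeneous components all have the parity of `m`. -/
def PP (m : ℤ) : Submodule k V := ⨆ i : {i : ℤ // Even (i - m)}, L.grading i.1

lemma grading_le_PP {i m : ℤ} (h : Even (i - m)) : L.grading i ≤ PP L m :=
  le_iSup (fun i : {i : ℤ // Even (i - m)} => L.grading i.1) ⟨i, h⟩

lemma PP_eq_of_even_sub {m m' : ℤ} (h : Even (m - m')) : PP L m = PP L m' := by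
  have key : ∀ a b : ℤ, Even (a - b) → PP L a ≤ PP L b := by
    intro a b hab
    apply iSup_le
    rintro ⟨i, hi⟩
    apply L.grading_le_PP
    have : i - b = (i - a) + (a - b) := by ring
    rw [this]; exact hi.add hab
  exact le_antisymm (key _ _ h) (key _ _ (by simpa using h.neg))

variable {L}

lemma PP_induction {m : ℤ} {C : V → Prop} {x : V} (hx : x ∈ PP L m)
    (mem : ∀ i : ℤ, Even (i - m) → ∀ y ∈ L.grading i, C y)
    (zero : C 0) (add : ∀ y z, C y → C z → C (y + z)) : C x := by
  refine Submodule.iSup_induction (x := x)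
    (fun i : {i : ℤ // Even (i - m)} => L.grading i.1) (motive := C) hx ?_ zero add
  rintro ⟨i, hi⟩ y hy
  exact mem i hi y hy

lemma bk_mem_PP {m m' : ℤ} {x y : V} (hx : x ∈ PP L m) (hy : y ∈ PP L m') :
    L.bracket x y ∈ PP L (m + m') := by
  refine PP_induction (C := fun x => L.bracket x y ∈ PP L (m + m')) hx ?_ (by simp)
    (fun u v hu hv => by rw [map_add, LinearMap.add_apply]; exact add_mem hu hv)
  intro i hi x hxg
  refine PP_induction (C := fun y => L.bracket x y ∈ PP L (m + m')) hy ?_ (by simp)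
    (fun u v hu hv => by rw [map_add]; exact add_mem hu hv)
  intro j hj y hyg
  exact L.grading_le_PP (by
    have : i + j - (m + m') = (i - m) + (j - m') := by ring
    rw [this]; exact hi.add hj) (L.bracket_mem i j x y hxg hyg)

lemma bk_antisymm_PP {m m' : ℤ} {x y : V} (hx : x ∈ PP L m) (hy : y ∈ PP L m') :
    L.bracket x y = - (gsign k (m * m') • L.bracket y x) := by
  refine PP_induction (C := fun x => L.bracket x y = - (gsign k (m * m') • L.bracket y x)) hx ?_
    (by simp) (fun u v hu hv => by
      rw [map_add, LinearMap.add_apply, hu, hv, map_add, smul_add, neg_add])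
  intro i hi x hxg
  refine PP_induction (C := fun y => L.bracket x y = - (gsign k (m * m') • L.bracket y x)) hy ?_
    (by simp) (fun u v hu hv => by
      rw [map_add, hu, hv, map_add, LinearMap.add_apply, smul_add, neg_add])
  intro j hj y hyg
  rw [L.bracket_antisymm i j x y hxg hyg, gsign_mul_congr k hi hj]

lemma bk_jacobi_PP {m m' m'' : ℤ} {x y z : V} (hx : x ∈ PP L m) (hy : y ∈ PP L m')
    (hz : z ∈ PP L m'') :
    L.bracket x (L.bracket y z) =
      L.bracket (L.bracket x y) z + gsign k (m * m') • L.bracket y (L.bracket x z) := by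
  refine PP_induction (C := fun x => L.bracket x (L.bracket y z) =
      L.bracket (L.bracket x y) z + gsign k (m * m') • L.bracket y (L.bracket x z)) hx ?_
    (by simp) (fun u v hu hv => by
      simp only [map_add, LinearMap.add_apply]; rw [hu, hv]; module)
  intro i hi x hxg
  refine PP_induction (C := fun y => L.bracket x (L.bracket y z) =
      L.bracket (L.bracket x y) z + gsign k (m * m') • L.bracket y (L.bracket x z)) hy ?_
    (by simp) (fun u v hu hv => by
      simp only [map_add, LinearMap.add_apply]; rw [hu, hv]; module)
  intro j hj y hyg
  refine PP_induction (C := fun z => L.bracket x (L.bracket y z) =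
      L.bracket (L.bracket x y) z + gsign k (m * m') • L.bracket y (L.bracket x z)) hz ?_
    (by simp) (fun u v hu hv => by
      simp only [map_add]; rw [hu, hv]; module)
  intro l hl z hzg
  rw [L.bracket_jacobi i j l x y z hxg hyg hzg, gsign_mul_congr k hi hj]

/-- `[[x,y],z] = [x,[y,z]] + (−1)^{|y||z|}[[x,z],y]`. -/
lemma bk_move_PP {m m' m'' : ℤ} {x y z : V} (hx : x ∈ PP L m) (hy : y ∈ PP L m')
    (hz : z ∈ PP L m'') :
    L.bracket (L.bracket x y) z =
      L.bracket x (L.bracket y z) + gsign k (m' * m'') • L.bracket (L.bracket x z) y := by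
  have hj := bk_jacobi_PP hx hy hz
  have hxz : L.bracket x z ∈ PP L (m + m'') := bk_mem_PP hx hz
  have ha : L.bracket y (L.bracket x z) =
      - (gsign k (m' * (m + m'')) • L.bracket (L.bracket x z) y) := bk_antisymm_PP hy hxz
  have hsign : gsign k (m * m') * gsign k (m' * (m + m'')) = gsign k (m' * m'') := by
    rw [← gsign_add]
    apply gsign_eq_of_even_sub
    exact ⟨m * m', by ring⟩
  have hB : L.bracket (L.bracket x y) z =
      L.bracket x (L.bracket y z) - gsign k (m * m') • L.bracket y (L.bracket x z) := by
    rw [hj]; abel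
  rw [hB, ha, smul_neg, sub_neg_eq_add, smul_smul, hsign]

end ZGradedLieAlgebra


section Projection
variable {k V : Type*} [Field k] [AddCommGroup V] [Module k V] (L : ZGradedLieAlgebra k V)
variable (𝔞 𝔟 : Submodule k V) (P : V →ₗ[k] V)

variable (hcompl : IsCompl 𝔞 𝔟)
  (hP𝔞 : ∀ x ∈ 𝔞, P x = x) (hP𝔟 : ∀ x ∈ 𝔟, P x = 0)

include hcompl hP𝔞 hP𝔟 in
lemma P_mem_a (x : V) : P x ∈ 𝔞 ∧ x - P x ∈ 𝔟 := by
  have hsup : x ∈ 𝔞 ⊔ 𝔟 := by rw [hcompl.sup_eq_top]; trivial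
  obtain ⟨u, hu, v, hv, huv⟩ := Submodule.mem_sup.mp hsup
  have hPx : P x = u := by
    rw [← huv, map_add, hP𝔞 u hu, hP𝔟 v hv, add_zero]
  constructor
  · rw [hPx]; exact hu
  · rw [hPx, ← huv]; simpa using hv

/-- the graded component projection, as a linear map -/
def gradProj (j : ℤ) : V →ₗ[k] V :=
  (L.grading j).subtype ∘ₗ (DirectSum.component k ℤ (fun i => ↥(L.grading i)) j) ∘ₗ
    (LinearEquiv.ofBijective (DirectSum.coeLinearMap L.grading) L.isInternal).symm.toLinearMap

lemma gradProj_of_mem {i j : ℤ} {x : V} (hx : x ∈ L.grading i) :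
    gradProj L j x = if i = j then x else 0 := by
  unfold gradProj
  have he : (LinearEquiv.ofBijective (DirectSum.coeLinearMap L.grading) L.isInternal).symm x
      = DirectSum.lof k ℤ (fun i => ↥(L.grading i)) i ⟨x, hx⟩ := by
    apply (LinearEquiv.ofBijective (DirectSum.coeLinearMap L.grading) L.isInternal).injective
    rw [LinearEquiv.apply_symm_apply]
    show x = DirectSum.coeLinearMap L.grading _
    rw [DirectSum.lof_eq_of, DirectSum.coeLinearMap_of]
  simp only [LinearMap.coe_comp, Function.comp_apply, LinearEquiv.coe_coe, he]
  rw [DirectSum.component.of]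
  by_cases h : i = j
  · subst h; simp
  · simp [h]

lemma gradProj_finsupp_sum {j : ℤ} (f : ℤ →₀ V) (hf : ∀ i, f i ∈ L.grading i) :
    gradProj L j (f.sum fun _ x => x) = f j := by
  rw [Finsupp.sum, map_sum]
  by_cases hj : j ∈ f.support
  · rw [Finset.sum_eq_single_of_mem j hj]
    · rw [gradProj_of_mem L (hf j), if_pos rfl]
    · intro i _ hij
      rw [gradProj_of_mem L (hf i), if_neg hij]
  · rw [Finset.sum_eq_zero, eq_comm]
    · exact Finsupp.notMem_support_iff.mp hj
    · intro i hi
      rw [gradProj_of_mem L (hf i), if_neg]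
      intro h; subst h; exact hj hi

variable (h𝔞gr : IsGradedSubspace L.grading 𝔞) (h𝔟gr : IsGradedSubspace L.grading 𝔟)

include hcompl hP𝔞 hP𝔟 h𝔞gr h𝔟gr in
lemma P_grading {i : ℤ} {x : V} (hx : x ∈ L.grading i) : P x ∈ L.grading i := by
  classical
  obtain ⟨hPa, hQb⟩ := P_mem_a 𝔞 𝔟 P hcompl hP𝔞 hP𝔟 x
  have h1 : P x ∈ ⨆ j : ℤ, 𝔞 ⊓ L.grading j := by rw [← h𝔞gr]; exact hPa
  have h2 : x - P x ∈ ⨆ j : ℤ, 𝔟 ⊓ L.grading j := by rw [← h𝔟gr]; exact hQb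
  obtain ⟨f, hf, hfsum⟩ := (Submodule.mem_iSup_iff_exists_finsupp _ _).mp h1
  obtain ⟨g, hg, hgsum⟩ := (Submodule.mem_iSup_iff_exists_finsupp _ _).mp h2
  -- f j + g j = 0 for j ≠ i
  have hkey : ∀ j : ℤ, j ≠ i → f j = 0 := by
    intro j hj
    have hx0 : gradProj L j x = 0 := by
      rw [gradProj_of_mem L hx, if_neg (Ne.symm hj)]
    have hsum : gradProj L j (P x) + gradProj L j (x - P x) = 0 := by
      rw [← map_add, add_sub_cancel]; exact hx0
    have e1 : gradProj L j (P x) = f j := by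
      rw [← hfsum, gradProj_finsupp_sum L f (fun i => (hf i).2)]
    have e2 : gradProj L j (x - P x) = g j := by
      rw [← hgsum, gradProj_finsupp_sum L g (fun i => (hg i).2)]
    rw [e1, e2] at hsum
    have hmem : f j ∈ 𝔞 ⊓ 𝔟 := by
      constructor
      · exact (hf j).1
      · have : f j = -(g j) := eq_neg_of_add_eq_zero_left hsum
        rw [this]; exact neg_mem (hg j).1
    rw [hcompl.inf_eq_bot] at hmem
    exact hmem
  -- conclude
  rw [← hfsum, Finsupp.sum]
  apply Submodule.sum_mem
  intro j hjs
  by_cases hji : j = i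
  · subst hji; exact (hf j).2
  · rw [hkey j hji]; exact Submodule.zero_mem _

include hcompl hP𝔞 hP𝔟 h𝔞gr h𝔟gr in
lemma P_PP {m : ℤ} {x : V} (hx : x ∈ L.PP m) : P x ∈ L.PP m := by
  refine ZGradedLieAlgebra.PP_induction (C := fun x => P x ∈ L.PP m) hx ?_ (by simp) ?_
  · intro i hi y hy
    exact L.grading_le_PP hi (P_grading L 𝔞 𝔟 P hcompl hP𝔞 hP𝔟 h𝔞gr h𝔟gr hy)
  · intro u v hu hv
    rw [map_add]; exact add_mem hu hv

variable (h𝔞ab : ∀ a ∈ 𝔞, ∀ a' ∈ 𝔞, L.bracket a a' = 0)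
  (h𝔟sub : ∀ x ∈ 𝔟, ∀ y ∈ 𝔟, L.bracket x y ∈ 𝔟)

include hcompl hP𝔞 hP𝔟 h𝔞gr h𝔟gr h𝔞ab h𝔟sub in
/-- The key projection identity `(★)`:
`P[x,y] = P[x,Py] − (−1)^{mm'} P[y,Px]` for `x,y` of parities `m, m'`. -/
lemma P_bk_split {m m' : ℤ} {x y : V} (hx : x ∈ L.PP m) (hy : y ∈ L.PP m') :
    P (L.bracket x y) =
      P (L.bracket x (P y)) - gsign k (m * m') • P (L.bracket y (P x)) := by
  obtain ⟨hPxa, hQxb⟩ := P_mem_a 𝔞 𝔟 P hcompl hP𝔞 hP𝔟 x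
  obtain ⟨hPya, hQyb⟩ := P_mem_a 𝔞 𝔟 P hcompl hP𝔞 hP𝔟 y
  have hPx : P x ∈ L.PP m := P_PP L 𝔞 𝔟 P hcompl hP𝔞 hP𝔟 h𝔞gr h𝔟gr hx
  have hysplit : L.bracket x y = L.bracket x (P y) + L.bracket x (y - P y) := by
    conv_lhs => rw [show y = P y + (y - P y) from by abel]
    rw [map_add]
  have hxsplit : L.bracket x (y - P y) =
      L.bracket (P x) (y - P y) + L.bracket (x - P x) (y - P y) := by
    conv_lhs => rw [show x = P x + (x - P x) from by abel]
    rw [map_add, LinearMap.add_apply]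
  rw [hysplit, hxsplit, map_add, map_add]
  have h3 : P (L.bracket (x - P x) (y - P y)) = 0 :=
    hP𝔟 _ (h𝔟sub _ hQxb _ hQyb)
  rw [h3, add_zero]
  have h2 : L.bracket (P x) (y - P y) = L.bracket (P x) y := by
    rw [map_sub]
    rw [h𝔞ab _ hPxa _ hPya]
    abel
  rw [h2]
  have h4 : L.bracket (P x) y = - (gsign k (m * m') • L.bracket y (P x)) :=
    ZGradedLieAlgebra.bk_antisymm_PP hPx hy
  rw [h4]
  rw [map_neg, map_smul]
  abel

end Projection

section XPart
variable {k V : Type*} [Field k] [AddCommGroup V] [Module k V]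

/-- Iterated bracket of `e` with the arguments `a i`, `i ∈ S`, in increasing order. -/
def Xb (bk : V →ₗ[k] V →ₗ[k] V) (e : V) {n : ℕ} (a : Fin n → V) (S : Finset (Fin n)) : V :=
  (S.sort (· ≤ ·)).foldl (fun x i => bk x (a i)) e

@[simp] lemma Xb_empty (bk : V →ₗ[k] V →ₗ[k] V) (e : V) {n : ℕ} (a : Fin n → V) :
    Xb bk e a ∅ = e := by simp [Xb]

lemma List_eq_of_perm_of_sorted {α : Type*} [PartialOrder α] {l₁ l₂ : List α}
    (hp : l₁.Perm l₂) (h1 : l₁.Pairwise (· ≤ ·)) (h2 : l₂.Pairwise (· ≤ ·)) : l₁ = l₂ :=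
  hp.eq_of_pairwise' h1 h2

lemma sort_insert_max {n : ℕ} {S : Finset (Fin n)} {m : Fin n}
    (hmax : ∀ x ∈ S, x < m) (hm : m ∉ S) :
    (insert m S).sort (· ≤ ·) = S.sort (· ≤ ·) ++ [m] := by
  apply List_eq_of_perm_of_sorted
  · apply List.perm_of_nodup_nodup_toFinset_eq
    · exact Finset.sort_nodup _ _
    · rw [List.nodup_append]
      refine ⟨Finset.sort_nodup _ _, List.nodup_singleton m, ?_⟩
      intro x hx
      simp only [List.mem_singleton]
      intro y hy h; subst hy; subst h
      exact hm ((Finset.mem_sort (α := Fin n) (· ≤ ·)).mp hx)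
    · ext x
      simp [Finset.mem_insert, or_comm]
  · exact Finset.pairwise_sort _ _
  · rw [List.pairwise_append]
    refine ⟨Finset.pairwise_sort _ _, List.pairwise_singleton _ _, ?_⟩
    intro x hx y hy
    simp only [List.mem_singleton] at hy; subst hy
    exact le_of_lt (hmax x ((Finset.mem_sort (α := Fin n) (· ≤ ·)).mp hx))

lemma Xb_insert_max (bk : V →ₗ[k] V →ₗ[k] V) (e : V) {n : ℕ} (a : Fin n → V)
    {S : Finset (Fin n)} {m : Fin n} (hmax : ∀ x ∈ S, x < m) (hm : m ∉ S) :
    Xb bk e a (insert m S) = bk (Xb bk e a S) (a m) := by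
  unfold Xb
  rw [sort_insert_max hmax hm, List.foldl_append]
  rfl

lemma iterBr_eq_foldl (bk : V →ₗ[k] V →ₗ[k] V) (e : V) (b : ℕ) (v : Fin b → V) :
    iterBr k bk e b v = (List.ofFn v).foldl (fun x w => bk x w) e := by
  induction b with
  | zero => simp [iterBr]
  | succ b ih =>
    rw [List.ofFn_succ', List.concat_eq_append, List.foldl_append,
      ← ih (fun i => v i.castSucc)]
    rfl

lemma Xb_eq_iterBr (bk : V →ₗ[k] V →ₗ[k] V) (e : V) {n : ℕ} (a : Fin n → V)
    {b : ℕ} {ι : Fin b → Fin n} (hι : StrictMono ι) :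
    Xb bk e a (Finset.image ι Finset.univ) = iterBr k bk e b (a ∘ ι) := by
  rw [iterBr_eq_foldl]
  unfold Xb
  have hsort : (Finset.image ι Finset.univ).sort (· ≤ ·) = List.ofFn ι := by
    apply List_eq_of_perm_of_sorted
    · apply List.perm_of_nodup_nodup_toFinset_eq (Finset.sort_nodup _ _)
        ((List.nodup_ofFn).mpr hι.injective)
      ext x
      simp [List.mem_ofFn]
    · exact Finset.pairwise_sort _ _
    · exact List.pairwise_ofFn.mpr (fun i j hij => (hι hij).le)
  rw [hsort, ← List.map_ofFn (f := ι) (g := a), List.foldl_map]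

lemma iterBr_cons (bk : V →ₗ[k] V →ₗ[k] V) (e g : V) (b : ℕ) (w : Fin b → V) :
    iterBr k bk e (b + 1) (Fin.cons g w) = iterBr k bk (bk e g) b w := by
  induction b with
  | zero => rfl
  | succ b ih =>
    have harg : (fun p : Fin (b+1) => (Fin.cons g w : Fin (b+2) → V) p.castSucc)
        = Fin.cons g (fun p : Fin b => w p.castSucc) := by
      funext p
      refine Fin.cases ?_ (fun i => ?_) p
      · rfl
      · show (Fin.cons g w : Fin (b+2) → V) (i.succ.castSucc) = w i.castSucc
        rw [← Fin.succ_castSucc]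
        simp
    have hlast : (Fin.cons g w : Fin (b+2) → V) (Fin.last (b+1)) = w (Fin.last b) := by
      have h : Fin.last (b+1) = (Fin.last b).succ := rfl
      rw [h, Fin.cons_succ]
    show bk (iterBr k bk e (b+1) (fun p => (Fin.cons g w : Fin (b+2) → V) p.castSucc))
        ((Fin.cons g w : Fin (b+2) → V) (Fin.last (b+1))) = _
    rw [harg, ih, hlast]
    rfl

end XPart

section Kappa
variable (k : Type*) [Field k] {n : ℕ} (d : Fin n → ℤ)

/-- The cross Koszul sign of an ordered pair of disjoint subsets. -/
def kappa (S T : Finset (Fin n)) : k :=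
  ∏ u ∈ S, ∏ v ∈ T.filter (· < u), gsign k (d u * d v)

@[simp] lemma kappa_empty_left (T : Finset (Fin n)) : kappa k d ∅ T = 1 := by simp [kappa]

@[simp] lemma kappa_empty_right (S : Finset (Fin n)) : kappa k d S ∅ = 1 := by simp [kappa]

lemma kappa_insert_right_max {S T : Finset (Fin n)} {m : Fin n} (hmax : ∀ x ∈ S, x < m) :
    kappa k d S (insert m T) = kappa k d S T := by
  unfold kappa
  apply Finset.prod_congr rfl
  intro u hu
  rw [Finset.filter_insert, if_neg]
  exact fun h => absurd (h.trans (hmax u hu)) (lt_irrefl m)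

lemma kappa_insert_left {S T : Finset (Fin n)} {m : Fin n} (hm : m ∉ S)
    (hmax : ∀ v ∈ T, v < m) :
    kappa k d (insert m S) T = (∏ v ∈ T, gsign k (d m * d v)) * kappa k d S T := by
  unfold kappa
  rw [Finset.prod_insert hm, Finset.filter_true_of_mem hmax]

lemma gsign_mul_sum (c : ℤ) (T : Finset (Fin n)) :
    ∏ v ∈ T, gsign k (c * d v) = gsign k (c * ∑ v ∈ T, d v) := by
  rw [Finset.mul_sum, gsign_sum]

lemma kappa_mul_kappa_swap {S T : Finset (Fin n)} (hdisj : Disjoint S T) :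
    kappa k d S T * kappa k d T S = gsign k ((∑ u ∈ S, d u) * (∑ v ∈ T, d v)) := by
  have hfull : ∏ u ∈ S, ∏ v ∈ T, gsign k (d u * d v)
      = kappa k d S T * kappa k d T S := by
    have hsplit : ∀ u ∈ S, ∏ v ∈ T, gsign k (d u * d v) =
        (∏ v ∈ T.filter (· < u), gsign k (d u * d v)) *
          ∏ v ∈ T.filter (fun v => u < v), gsign k (d u * d v) := by
      intro u hu
      rw [← Finset.prod_filter_mul_prod_filter_not T (· < u)]
      congr 1
      apply Finset.prod_congr _ (fun _ _ => rfl)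
      apply Finset.filter_congr
      intro v hv
      have hne : v ≠ u := fun h =>
        Finset.disjoint_left.mp hdisj hu (h ▸ hv)
      simp only [not_lt]
      constructor
      · intro h; exact lt_of_le_of_ne h (Ne.symm hne)
      · exact le_of_lt
    rw [Finset.prod_congr rfl hsplit, Finset.prod_mul_distrib]
    congr 1
    rw [Finset.prod_comm' (s := S) (t := fun u => T.filter (fun v => u < v)) (t' := T)
      (s' := fun v => S.filter (· < v)) (by
        intro x y
        simp only [Finset.mem_filter]
        tauto)]
    unfold kappa
    apply Finset.prod_congr rfl
    intro v _
    apply Finset.prod_congr rfl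
    intro u _
    rw [mul_comm]
  rw [← hfull]
  have h1 : ∀ u ∈ S, ∏ v ∈ T, gsign k (d u * d v) = gsign k (d u * ∑ v ∈ T, d v) :=
    fun u _ => gsign_mul_sum k d (d u) T
  rw [Finset.prod_congr rfl h1, ← gsign_sum, Finset.sum_mul]

lemma kappa_sq (S T : Finset (Fin n)) : kappa k d S T * kappa k d S T = 1 := by
  unfold kappa
  rw [← Finset.prod_mul_distrib]
  apply Finset.prod_eq_one
  intro u _
  rw [← Finset.prod_mul_distrib]
  apply Finset.prod_eq_one
  intro v _
  exact gsign_sq k _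

end Kappa

section Claims
variable {k V : Type*} [Field k] [AddCommGroup V] [Module k V] (L : ZGradedLieAlgebra k V)
variable {n : ℕ} (d : Fin n → ℤ) (a : Fin n → V)

lemma Xb_mem_PP {e : V} {me : ℤ} (he : e ∈ L.PP me) (ha : ∀ p, a p ∈ L.PP (d p))
    (S : Finset (Fin n)) : Xb L.bracket e a S ∈ L.PP (me + ∑ i ∈ S, d i) := by
  induction S using Finset.induction_on_max with
  | empty => simpa using he
  | insert m s hlt ih =>
    have hm : m ∉ s := fun h => lt_irrefl m (hlt m h)
    rw [Xb_insert_max _ _ _ hlt hm, Finset.sum_insert hm]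
    have heq : me + (d m + ∑ i ∈ s, d i) = (me + ∑ i ∈ s, d i) + d m := by ring
    rw [heq]
    exact ZGradedLieAlgebra.bk_mem_PP ih (ha m)

lemma claimA {Δ : V} (hΔ : Δ ∈ L.PP 1) (ha : ∀ p, a p ∈ L.PP (d p)) (s : Finset (Fin n)) :
    Xb L.bracket (L.bracket Δ Δ) a s =
      ∑ S ∈ s.powerset, (gsign k (∑ i ∈ S, d i) * kappa k d S (s \ S)) •
        L.bracket (Xb L.bracket Δ a S) (Xb L.bracket Δ a (s \ S)) := by
  induction s using Finset.induction_on_max with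
  | empty =>
    rw [Finset.powerset_empty, Finset.sum_singleton]
    simp [gsign_even k (Even.zero)]
  | insert m s hlt ih =>
    have hm : m ∉ s := fun h => lt_irrefl m (hlt m h)
    rw [Xb_insert_max _ _ _ hlt hm, ih, map_sum, Finset.sum_powerset_insert hm]
    simp only [LinearMap.sum_apply, LinearMap.smul_apply, map_smul]
    have hterm : ∀ S ∈ s.powerset,
        (gsign k (∑ i ∈ S, d i) * kappa k d S (s \ S)) •
            (L.bracket (L.bracket (Xb L.bracket Δ a S) (Xb L.bracket Δ a (s \ S)))) (a m) =
          (gsign k (∑ i ∈ S, d i) * kappa k d S ((insert m s) \ S)) •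
            L.bracket (Xb L.bracket Δ a S) (Xb L.bracket Δ a ((insert m s) \ S)) +
          (gsign k (∑ i ∈ insert m S, d i) * kappa k d (insert m S) ((insert m s) \ (insert m S))) •
            L.bracket (Xb L.bracket Δ a (insert m S)) (Xb L.bracket Δ a ((insert m s) \ (insert m S))) := by
      intro S hS
      have hSs : S ⊆ s := Finset.mem_powerset.mp hS
      have hmS : m ∉ S := fun h => hm (hSs h)
      have hmaxS : ∀ x ∈ S, x < m := fun x hx => hlt x (hSs hx)
      have hmaxT : ∀ x ∈ s \ S, x < m := fun x hx => hlt x (Finset.mem_sdiff.mp hx).1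
      have hmT : m ∉ s \ S := fun h => hm (Finset.mem_sdiff.mp h).1
      have hset1 : (insert m s) \ S = insert m (s \ S) :=
        Finset.insert_sdiff_of_notMem s hmS
      have hset2 : (insert m s) \ (insert m S) = s \ S := by
        ext x
        simp only [Finset.mem_sdiff, Finset.mem_insert, not_or]
        constructor
        · rintro ⟨h1, h2, h3⟩
          rcases h1 with h1 | h1
          · exact absurd h1 h2
          · exact ⟨h1, h3⟩
        · rintro ⟨h1, h2⟩
          exact ⟨Or.inr h1, fun h => hm (h ▸ h1), h2⟩
      have hXS := Xb_mem_PP L d a hΔ ha S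
      have hXT := Xb_mem_PP L d a hΔ ha (s \ S)
      have hmove := ZGradedLieAlgebra.bk_move_PP (L := L) hXS hXT (ha m)
      rw [hmove]
      rw [← Xb_insert_max L.bracket Δ a hmaxT hmT, ← Xb_insert_max L.bracket Δ a hmaxS hmS]
      rw [hset1, hset2, smul_add, smul_smul]
      congr 2
      rw [kappa_insert_right_max k d hmaxS]
      rw [Finset.sum_insert hmS, kappa_insert_left k d hmS hmaxT,
        gsign_mul_sum k d (d m) (s \ S),
        show (1 + ∑ i ∈ s \ S, d i) * d m = d m + d m * ∑ i ∈ s \ S, d i from by ring,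
        gsign_add, gsign_add]
      ring
    rw [Finset.sum_congr rfl hterm, Finset.sum_add_distrib]

lemma claimB (𝔞 : Submodule k V) (h𝔞ab : ∀ x ∈ 𝔞, ∀ y ∈ 𝔞, L.bracket x y = 0)
    {Δ : V} (hΔ : Δ ∈ L.PP 1) (ha : ∀ p, a p ∈ L.PP (d p)) (ha' : ∀ p, a p ∈ 𝔞)
    {g : V} (hg : g ∈ 𝔞) {pg : ℤ} (hgP : g ∈ L.PP pg) (T : Finset (Fin n)) :
    Xb L.bracket (L.bracket Δ g) a T =
      (∏ t ∈ T, gsign k (pg * d t)) • L.bracket (Xb L.bracket Δ a T) g := by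
  induction T using Finset.induction_on_max with
  | empty => simp
  | insert m s hlt ih =>
    have hm : m ∉ s := fun h => lt_irrefl m (hlt m h)
    rw [Xb_insert_max _ _ _ hlt hm, ih, LinearMap.map_smul, LinearMap.smul_apply]
    have hXs := Xb_mem_PP L d a hΔ ha s
    have hmove := ZGradedLieAlgebra.bk_move_PP (L := L) hXs hgP (ha m)
    rw [hmove, h𝔞ab g hg (a m) (ha' m), map_zero, zero_add]
    rw [← Xb_insert_max L.bracket Δ a hlt hm, Finset.prod_insert hm, smul_smul, mul_comm]
end Claims

section Shuffles
variable {n j : ℕ}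

lemma mem_shuffles_iff {τ : Equiv.Perm (Fin n)} :
    τ ∈ shuffles j n ↔
      (∀ p q : Fin n, p.1 < j → q.1 < j → p < q → τ p < τ q) ∧
      (∀ p q : Fin n, j ≤ p.1 → j ≤ q.1 → p < q → τ p < τ q) := by
  unfold shuffles
  simp [Finset.mem_filter]

/-- The subset attached to a shuffle. -/
def Sof (j : ℕ) (hj : j ≤ n) (τ : Equiv.Perm (Fin n)) : Finset (Fin n) :=
  Finset.image (fun p : Fin j => τ (Fin.castLE hj p)) Finset.univ

lemma Sof_card (hj : j ≤ n) (τ : Equiv.Perm (Fin n)) : (Sof j hj τ).card = j := by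
  unfold Sof
  rw [Finset.card_image_of_injective _ (fun p q h => by
    have := τ.injective h
    exact Fin.ext (congrArg Fin.val this : (Fin.castLE hj p).1 = _))]
  simp

lemma strictMono_head (hj : j ≤ n) {τ : Equiv.Perm (Fin n)} (hτ : τ ∈ shuffles j n) :
    StrictMono (fun p : Fin j => τ (Fin.castLE hj p)) := by
  intro p q hpq
  exact (mem_shuffles_iff.mp hτ).1 _ _ (by simpa using p.isLt.trans_le hj |> fun _ => p.isLt)
    (by exact q.isLt) (by exact hpq)

lemma strictMono_tail (hj : j ≤ n) {τ : Equiv.Perm (Fin n)} (hτ : τ ∈ shuffles j n) :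
    StrictMono (fun p : Fin (n - j) => τ ⟨j + p.1, by omega⟩) := by
  intro p q hpq
  exact (mem_shuffles_iff.mp hτ).2 _ _ (by simp) (by simp) (by simpa using hpq)

lemma mem_Sof_of_lt (hj : j ≤ n) (τ : Equiv.Perm (Fin n)) {p : Fin n} (hp : p.1 < j) :
    τ p ∈ Sof j hj τ := by
  unfold Sof
  exact Finset.mem_image.mpr ⟨⟨p.1, hp⟩, Finset.mem_univ _, by congr 1⟩

lemma not_mem_Sof_of_ge (hj : j ≤ n) (τ : Equiv.Perm (Fin n)) {p : Fin n} (hp : j ≤ p.1) :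
    τ p ∉ Sof j hj τ := by
  unfold Sof
  intro h
  obtain ⟨q, _, hq⟩ := Finset.mem_image.mp h
  have := τ.injective hq
  rw [← this] at hp
  exact absurd hp (by simpa using q.isLt)

lemma image_tail_eq_compl (hj : j ≤ n) {τ : Equiv.Perm (Fin n)} (hτ : τ ∈ shuffles j n) :
    Finset.image (fun p : Fin (n - j) => τ ⟨j + p.1, by omega⟩) Finset.univ
      = (Sof j hj τ)ᶜ := by
  apply Finset.eq_of_subset_of_card_le
  · intro x hx
    obtain ⟨q, _, hq⟩ := Finset.mem_image.mp hx
    rw [Finset.mem_compl, ← hq]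
    exact not_mem_Sof_of_ge hj τ (by simp)
  · rw [Finset.card_compl, Sof_card hj τ, Fintype.card_fin,
      Finset.card_image_of_injective _ ((strictMono_tail hj hτ).injective)]
    simp

end Shuffles

section ShufOf
variable {n j : ℕ}

lemma compl_card {S : Finset (Fin n)} (hS : S.card = j) : Sᶜ.card = n - j := by
  rw [Finset.card_compl, hS, Fintype.card_fin]

/-- The shuffle attached to a subset of cardinality `j`. -/
def shufOf (hj : j ≤ n) (S : Finset (Fin n)) (hS : S.card = j) : Equiv.Perm (Fin n) :=
  Equiv.ofBijective
    (fun p => if h : p.1 < j then S.orderEmbOfFin hS ⟨p.1, h⟩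
      else Sᶜ.orderEmbOfFin (compl_card hS) ⟨p.1 - j, by have := p.isLt; omega⟩)
    (by
      rw [← Finite.injective_iff_bijective]
      intro p q hpq
      by_cases hp : p.1 < j <;> by_cases hq : q.1 < j <;>
        simp only [hp, hq, dif_pos, dif_neg, not_false_iff] at hpq
      · have := (S.orderEmbOfFin hS).injective hpq
        exact Fin.ext (congrArg Fin.val this : _)
      · exact absurd ((hpq ▸ Finset.orderEmbOfFin_mem S hS _ : _ ∈ S))
          (Finset.mem_compl.mp (Finset.orderEmbOfFin_mem Sᶜ (compl_card hS) _))
      · exact absurd ((hpq ▸ Finset.orderEmbOfFin_mem Sᶜ (compl_card hS) _ : _ ∈ Sᶜ) : _)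
          (by simpa using Finset.orderEmbOfFin_mem S hS _)
      · have := (Sᶜ.orderEmbOfFin (compl_card hS)).injective hpq
        have h2 : p.1 - j = q.1 - j := congrArg Fin.val this
        exact Fin.ext (by omega))

lemma shufOf_apply_lt (hj : j ≤ n) {S : Finset (Fin n)} (hS : S.card = j) {p : Fin n}
    (hp : p.1 < j) : shufOf hj S hS p = S.orderEmbOfFin hS ⟨p.1, hp⟩ := by
  unfold shufOf
  rw [Equiv.ofBijective_apply, dif_pos hp]

lemma shufOf_apply_ge (hj : j ≤ n) {S : Finset (Fin n)} (hS : S.card = j) {p : Fin n}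
    (hp : ¬ p.1 < j) :
    shufOf hj S hS p = Sᶜ.orderEmbOfFin (compl_card hS) ⟨p.1 - j, by have := p.isLt; omega⟩ := by
  unfold shufOf
  rw [Equiv.ofBijective_apply, dif_neg hp]

lemma shufOf_mem_shuffles (hj : j ≤ n) {S : Finset (Fin n)} (hS : S.card = j) :
    shufOf hj S hS ∈ shuffles j n := by
  rw [mem_shuffles_iff]
  constructor
  · intro p q hp hq hpq
    rw [shufOf_apply_lt hj hS hp, shufOf_apply_lt hj hS hq]
    exact (S.orderEmbOfFin hS).strictMono (by exact hpq)
  · intro p q hp hq hpq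
    rw [shufOf_apply_ge hj hS (not_lt.mpr hp), shufOf_apply_ge hj hS (not_lt.mpr hq)]
    exact (Sᶜ.orderEmbOfFin (compl_card hS)).strictMono (by
      show p.1 - j < q.1 - j
      have : p.1 < q.1 := hpq
      omega)

lemma Sof_shufOf (hj : j ≤ n) {S : Finset (Fin n)} (hS : S.card = j) :
    Sof j hj (shufOf hj S hS) = S := by
  unfold Sof
  have himg : ∀ p : Fin j, shufOf hj S hS (Fin.castLE hj p) = S.orderEmbOfFin hS p := by
    intro p
    rw [shufOf_apply_lt hj hS (by exact p.isLt)]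
    congr 1
  rw [Finset.image_congr (fun p _ => himg p)]
  apply Finset.eq_of_subset_of_card_le
  · intro x hx
    obtain ⟨q, _, hq⟩ := Finset.mem_image.mp hx
    exact hq ▸ Finset.orderEmbOfFin_mem S hS q
  · rw [hS, Finset.card_image_of_injective _ (S.orderEmbOfFin hS).injective]
    simp

lemma shufOf_Sof (hj : j ≤ n) {τ : Equiv.Perm (Fin n)} (hτ : τ ∈ shuffles j n) :
    shufOf hj (Sof j hj τ) (Sof_card hj τ) = τ := by
  apply Equiv.ext
  intro p
  by_cases hp : p.1 < j
  · rw [shufOf_apply_lt hj _ hp]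
    have huniq := Finset.orderEmbOfFin_unique (Sof_card hj τ)
      (f := fun q : Fin j => τ (Fin.castLE hj q))
      (fun q => mem_Sof_of_lt hj τ (by exact q.isLt)) (strictMono_head hj hτ)
    rw [← congrFun huniq ⟨p.1, hp⟩]
    congr 1
  · rw [shufOf_apply_ge hj _ hp]
    have huniq := Finset.orderEmbOfFin_unique (compl_card (Sof_card hj τ))
      (f := fun q : Fin (n - j) => τ ⟨j + q.1, by omega⟩)
      (fun q => by
        rw [← image_tail_eq_compl hj hτ]
        exact Finset.mem_image.mpr ⟨q, Finset.mem_univ _, rfl⟩)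
      (strictMono_tail hj hτ)
    rw [← congrFun huniq ⟨p.1 - j, by have := p.isLt; omega⟩]
    congr 1
    exact Fin.ext (by have := p.isLt; simp; omega)

end ShufOf

section KoszulKappa
variable (k : Type*) [Field k] {n j : ℕ}

lemma kappa_eq_prod_pairs (d : Fin n → ℤ) (S T : Finset (Fin n)) :
    kappa k d S T = ∏ p ∈ (S ×ˢ T).filter (fun p => p.2 < p.1), gsign k (d p.1 * d p.2) := by
  rw [Finset.prod_filter, Finset.prod_product]
  unfold kappa
  apply Finset.prod_congr rfl
  intro u _
  rw [Finset.prod_filter]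

lemma sof_symm_lt (hj : j ≤ n) (τ : Equiv.Perm (Fin n)) {x : Fin n} (hx : x ∈ Sof j hj τ) :
    (τ.symm x).1 < j := by
  obtain ⟨q, _, hq⟩ := Finset.mem_image.mp hx
  rw [← hq, Equiv.symm_apply_apply]
  simpa using q.isLt

lemma sof_symm_ge (hj : j ≤ n) (τ : Equiv.Perm (Fin n)) {x : Fin n} (hx : x ∉ Sof j hj τ) :
    j ≤ (τ.symm x).1 := by
  by_contra h
  push_neg at h
  exact hx (by
    have := mem_Sof_of_lt hj τ (p := τ.symm x) h
    rwa [Equiv.apply_symm_apply] at this)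

lemma koszulSign_eq_kappa (hj : j ≤ n) (d : Fin n → ℤ) {τ : Equiv.Perm (Fin n)}
    (hτ : τ ∈ shuffles j n) :
    koszulSign k d τ = kappa k d (Sof j hj τ) (Sof j hj τ)ᶜ := by
  rw [kappa_eq_prod_pairs]
  unfold koszulSign
  obtain ⟨hc1, hc2⟩ := mem_shuffles_iff.mp hτ
  apply Finset.prod_nbij' (i := fun p => (τ p.1, τ p.2)) (j := fun p => (τ.symm p.1, τ.symm p.2))
  · intro p hp
    rw [Finset.mem_filter] at hp
    obtain ⟨-, h12, hinv⟩ := hp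
    have hp1 : p.1.1 < j := by
      by_contra h
      push_neg at h
      have h2 : j ≤ p.2.1 := le_of_lt (lt_of_le_of_lt h h12)
      exact absurd (hc2 p.1 p.2 h h2 h12) (lt_asymm hinv)
    have hp2 : j ≤ p.2.1 := by
      by_contra h
      push_neg at h
      exact absurd (hc1 p.1 p.2 (lt_trans h12 h) h h12) (lt_asymm hinv)
    rw [Finset.mem_filter, Finset.mem_product]
    exact ⟨⟨mem_Sof_of_lt hj τ hp1, Finset.mem_compl.mpr (not_mem_Sof_of_ge hj τ hp2)⟩, hinv⟩
  · intro c hc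
    rw [Finset.mem_filter, Finset.mem_product] at hc
    obtain ⟨⟨hc1', hc2'⟩, hlt⟩ := hc
    rw [Finset.mem_filter]
    refine ⟨Finset.mem_univ _, ?_, ?_⟩
    · have h1 := sof_symm_lt hj τ hc1'
      have h2 := sof_symm_ge hj τ (Finset.mem_compl.mp hc2')
      exact Fin.lt_def.mpr (lt_of_lt_of_le h1 h2)
    · rw [Equiv.apply_symm_apply, Equiv.apply_symm_apply]
      exact hlt
  · intro p _
    simp
  · intro c _
    simp
  · intro p _
    rfl

end KoszulKappa

/-- for a V-algebra `(V,[·,·],𝔞,P)` and `Δ = Δ₊ + Δ₋` with `Δ₊ ∈ V₁`,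
`Δ₋ ∈ V₋₁` (no Maurer–Cartan condition assumed), the `n`-th Jacobiator of the family of
higher derived brackets of `Δ` coincides with the `n`-th higher derived bracket of
`(1/2)[Δ,Δ]` on homogeneous arguments from `𝔞`. -/
theorem jacobiator_of_derived_brackets {k V : Type*} [Field k] [CharZero k]
    [AddCommGroup V] [Module k V] (L : ZGradedLieAlgebra k V)
    (𝔞 𝔟 : Submodule k V) (hcompl : IsCompl 𝔞 𝔟)
    (h𝔞gr : IsGradedSubspace L.grading 𝔞) (h𝔟gr : IsGradedSubspace L.grading 𝔟)
    (h𝔞ab : ∀ a ∈ 𝔞, ∀ a' ∈ 𝔞, L.bracket a a' = 0)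
    (h𝔟sub : ∀ x ∈ 𝔟, ∀ y ∈ 𝔟, L.bracket x y ∈ 𝔟)
    (P : V →ₗ[k] V) (hP𝔞 : ∀ x ∈ 𝔞, P x = x) (hP𝔟 : ∀ x ∈ 𝔟, P x = 0)
    (Δp Δm : V) (hΔp : Δp ∈ L.grading 1) (hΔm : Δm ∈ L.grading (-1)) :
    ∀ n : ℕ, 1 ≤ n → ∀ (d : Fin n → ℤ) (a : Fin n → V),
      (∀ p, a p ∈ 𝔞 ⊓ L.grading (d p)) →
        jacobiator k (fun b x => P (iterBr k L.bracket (Δp + Δm) b x)) n d a =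
          (2 : k)⁻¹ •
            P (iterBr k L.bracket (L.bracket (Δp + Δm) (Δp + Δm)) n a) := by
  intro n _hn d a ha
  classical
  set Δ : V := Δp + Δm with hΔdef
  have hΔ : Δ ∈ L.PP 1 := add_mem
    (L.grading_le_PP (show Even ((1:ℤ) - 1) from by decide) hΔp)
    (L.grading_le_PP (show Even ((-1:ℤ) - 1) from ⟨-1, by ring⟩) hΔm)
  have haP : ∀ p, a p ∈ L.PP (d p) := fun p =>
    L.grading_le_PP (by simp) (Submodule.mem_inf.mp (ha p)).2
  have ha𝔞 : ∀ p, a p ∈ 𝔞 := fun p => (Submodule.mem_inf.mp (ha p)).1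
  -- abbreviations
  set X : Finset (Fin n) → V := fun S => Xb L.bracket Δ a S with hXdef
  have hXmem : ∀ S : Finset (Fin n), X S ∈ L.PP (1 + ∑ i ∈ S, d i) :=
    fun S => Xb_mem_PP L d a hΔ haP S
  have hPX𝔞 : ∀ S : Finset (Fin n), P (X S) ∈ 𝔞 :=
    fun S => (P_mem_a 𝔞 𝔟 P hcompl hP𝔞 hP𝔟 (X S)).1
  have hPXP : ∀ S : Finset (Fin n), P (X S) ∈ L.PP (1 + ∑ i ∈ S, d i) :=
    fun S => P_PP L 𝔞 𝔟 P hcompl hP𝔞 hP𝔟 h𝔞gr h𝔟gr (hXmem S)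
  set v : Finset (Fin n) → V :=
    fun S => P (L.bracket (X Sᶜ) (P (X S))) with hvdef
  set H : Finset (Fin n) → V := fun S =>
    (kappa k d S Sᶜ * gsign k ((1 + ∑ i ∈ S, d i) * ∑ i ∈ Sᶜ, d i)) • v S with hHdef
  -- LHS computation
  have hLHS : jacobiator k (fun b x => P (iterBr k L.bracket Δ b x)) n d a
      = ∑ S ∈ (Finset.univ : Finset (Fin n)).powerset, H S := by
    unfold jacobiator jacobiator2
    have hjsum : ∀ jj : Fin (n + 1),
        ∑ τ ∈ shuffles jj.1 n, koszulSign k d τ •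
          (fun b x => P (iterBr k L.bracket Δ b x)) (n - jj.1 + 1)
            (Fin.cons
              ((fun b x => P (iterBr k L.bracket Δ b x)) jj.1
                (fun p => a (τ (Fin.castLE (Nat.lt_succ_iff.mp jj.isLt) p))))
              (fun p : Fin (n - jj.1) => a (τ ⟨jj.1 + p.1, by
                have h1 := p.isLt; have h2 := Nat.lt_succ_iff.mp jj.isLt; omega⟩)))
          = ∑ S ∈ Finset.powersetCard jj.1 (Finset.univ : Finset (Fin n)), H S := by
      intro jj
      have hj : jj.1 ≤ n := Nat.lt_succ_iff.mp jj.isLt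
      apply Finset.sum_nbij' (i := fun τ => Sof jj.1 hj τ)
        (j := fun S => if hS : S.card = jj.1 then shufOf hj S hS else 1)
      · intro τ hτ
        rw [Finset.mem_powersetCard_univ]
        exact Sof_card hj τ
      · intro S hS
        rw [Finset.mem_powersetCard_univ] at hS
        rw [dif_pos hS]
        exact shufOf_mem_shuffles hj hS
      · intro τ hτ
        rw [dif_pos (Sof_card hj τ)]
        exact shufOf_Sof hj hτ
      · intro S hS
        rw [Finset.mem_powersetCard_univ] at hS
        rw [dif_pos hS]
        exact Sof_shufOf hj hS
      · intro τ hτ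
        dsimp only
        set S := Sof jj.1 hj τ with hSdef
        have hhead : iterBr k L.bracket Δ jj.1
            (fun p => a (τ (Fin.castLE (Nat.lt_succ_iff.mp jj.isLt) p))) = X S := by
          rw [hXdef]
          exact (Xb_eq_iterBr L.bracket Δ a (strictMono_head hj hτ)).symm
        rw [hhead]
        have hcons : iterBr k L.bracket Δ (n - jj.1 + 1)
            (Fin.cons (P (X S)) (fun p : Fin (n - jj.1) => a (τ ⟨jj.1 + p.1, by
              have h1 := p.isLt; have h2 := Nat.lt_succ_iff.mp jj.isLt; omega⟩)))
            = Xb L.bracket (L.bracket Δ (P (X S))) a Sᶜ := by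
          rw [iterBr_cons]
          have htail := Xb_eq_iterBr L.bracket (L.bracket Δ (P (X S))) a
            (strictMono_tail hj hτ)
          rw [image_tail_eq_compl hj hτ] at htail
          exact htail.symm
        rw [hcons]
        have hclaimB := claimB L d a 𝔞 h𝔞ab hΔ haP ha𝔞 (hPX𝔞 S) (hPXP S) Sᶜ
        rw [hclaimB, koszulSign_eq_kappa k hj d hτ, ← hSdef]
        rw [map_smul, smul_smul, gsign_mul_sum k d _ Sᶜ]
    rw [Finset.sum_congr rfl (fun jj _ => hjsum jj)]
    rw [Fin.sum_univ_eq_sum_range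
      (fun jj => ∑ S ∈ Finset.powersetCard jj (Finset.univ : Finset (Fin n)), H S) (n+1)]
    rw [Finset.sum_powerset (Finset.univ : Finset (Fin n)) H]
    congr 1
    rw [Finset.card_univ, Fintype.card_fin]
  -- RHS computation
  have hR1 : iterBr k L.bracket (L.bracket Δ Δ) n a
      = Xb L.bracket (L.bracket Δ Δ) a Finset.univ := by
    have h := Xb_eq_iterBr L.bracket (L.bracket Δ Δ) a (ι := (id : Fin n → Fin n)) strictMono_id
    rw [Finset.image_id] at h
    exact h.symm
  have hΔΔ := claimA L d a hΔ haP (Finset.univ : Finset (Fin n))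
  rw [hLHS, hR1, hΔΔ, map_sum, Finset.smul_sum]
  simp only [map_smul]
  have hsplit : ∀ S ∈ (Finset.univ : Finset (Fin n)).powerset,
      (2:k)⁻¹ • ((gsign k (∑ i ∈ S, d i) * kappa k d S (Finset.univ \ S)) •
        P (L.bracket (Xb L.bracket Δ a S) (Xb L.bracket Δ a (Finset.univ \ S)))) =
      ((2:k)⁻¹ * (gsign k (∑ i ∈ S, d i) * kappa k d S Sᶜ)) •
          P (L.bracket (X S) (P (X Sᶜ)))
        - ((2:k)⁻¹ * (gsign k (∑ i ∈ S, d i) * kappa k d S Sᶜ) *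
            gsign k ((1 + ∑ i ∈ S, d i) * (1 + ∑ i ∈ Sᶜ, d i))) • v S := by
    intro S _
    have hc : (Finset.univ : Finset (Fin n)) \ S = Sᶜ := (Finset.compl_eq_univ_sdiff S).symm
    rw [hc]
    have hPsplit := P_bk_split L 𝔞 𝔟 P hcompl hP𝔞 hP𝔟 h𝔞gr h𝔟gr h𝔞ab h𝔟sub
      (hXmem S) (hXmem Sᶜ)
    rw [hXdef] at hPsplit ⊢
    rw [hPsplit, hvdef, hXdef]
    dsimp only
    module
  rw [Finset.sum_congr rfl hsplit, Finset.sum_sub_distrib]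
  have hreindex : ∑ S ∈ (Finset.univ : Finset (Fin n)).powerset,
      ((2:k)⁻¹ * (gsign k (∑ i ∈ S, d i) * kappa k d S Sᶜ)) •
        P (L.bracket (X S) (P (X Sᶜ))) =
      ∑ S ∈ (Finset.univ : Finset (Fin n)).powerset,
      ((2:k)⁻¹ * (gsign k (∑ i ∈ Sᶜ, d i) * kappa k d Sᶜ S)) • v S := by
    apply Finset.sum_nbij' (i := fun S => Sᶜ) (j := fun S => Sᶜ)
    · intro S _
      exact Finset.mem_powerset.mpr (Finset.subset_univ _)
    · intro S _
      exact Finset.mem_powerset.mpr (Finset.subset_univ _)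
    · intro S _
      exact compl_compl S
    · intro S _
      exact compl_compl S
    · intro S _
      rw [hvdef]
      simp only [compl_compl]
  rw [hreindex, ← Finset.sum_sub_distrib]
  apply Finset.sum_congr rfl
  intro S _
  rw [← sub_smul, hHdef]
  dsimp only
  congr 1
  set A := ∑ i ∈ S, d i with hA
  set B := ∑ i ∈ Sᶜ, d i with hB
  have hswap := kappa_mul_kappa_swap k d (S := S) (T := Sᶜ) disjoint_compl_right
  rw [← hA, ← hB] at hswap
  have hsq := kappa_sq k d S Sᶜ
  have hκ : kappa k d Sᶜ S = kappa k d S Sᶜ * gsign k (A * B) := by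
    calc kappa k d Sᶜ S = 1 * kappa k d Sᶜ S := (one_mul _).symm
    _ = (kappa k d S Sᶜ * kappa k d S Sᶜ) * kappa k d Sᶜ S := by rw [hsq]
    _ = kappa k d S Sᶜ * (kappa k d S Sᶜ * kappa k d Sᶜ S) := by ring
    _ = kappa k d S Sᶜ * gsign k (A * B) := by rw [hswap]
  have e1 : gsign k B * gsign k (A * B) = gsign k ((1 + A) * B) := by
    rw [← gsign_add]; congr 1; ring
  have e2 : gsign k A * gsign k ((1 + A) * (1 + B)) = - gsign k ((1 + A) * B) := by
    rw [← gsign_add, gsign_eq_of_even_sub (k := k)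
      (show Even (A + (1 + A) * (1 + B) - (1 + (1 + A) * B)) from ⟨A, by ring⟩),
      gsign_one_add]
  have htwo : (2:k)⁻¹ * 2 = 1 := by norm_num
  rw [hκ]
  linear_combination (-((2:k)⁻¹ * kappa k d S Sᶜ)) * e1 + ((2:k)⁻¹ * kappa k d S Sᶜ) * e2
    - (kappa k d S Sᶜ * gsign k ((1 + A) * B)) * htwo
end
end

section
/- (Maurer–Cartan characterization for the combined L∞-algebra.) Let (V,[·,·],𝔞,P) be a V-algebra over a field of characteristic 0, Δ ∈ V₁ with [Δ,Δ] = 0, and let (V[1]⊕𝔞)_Δ^P be the L∞-algebra with structure maps m₀ = P(Δ), m₁(v[1],a) = (−[Δ,v][1], P(v) + P[Δ,a]), m₂(v[1],w[1]) = (−1)^{|v|}[v,w][1], m_b(v[1],a₁,…,a_{b−1}) = P[⋯[[v,a₁],a₂],⋯,a_{b−1}] (b ≥ 2), m_b(a₁,…,a_b) = P[⋯[[Δ,a₁],a₂],⋯,a_b] (b ≥ 2), all other components zero. Let Δ̃ ∈ V₁ and a ∈ 𝔞₀, and assume there exists N such that all iterated brackets [⋯[[x,a],a],⋯,a] with at least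 N occurrences of a vanish for x = Δ and x = Δ̃ (so that all Maurer–Cartan sums below are finite). Then (Δ̃[1], a) satisfies the Maurer–Cartan equation Σ_{b≥0} (1/b!) m_b((Δ̃[1],a),…,(Δ̃[1],a)) = 0 if and only if [Δ+Δ̃, Δ+Δ̃] = 0 and a is a Maurer–Cartan element of the L∞-algebra on 𝔞 given by the higher derived brackets of Δ+Δ̃, i.e. Σ_{b≥0} (1/b!) P[⋯[[Δ+Δ̃,a],a],⋯,a] (b copies of a, the b = 0 term being P(Δ+Δ̃)) equals 0. -/
noncomputable section

/-- The degree-aware Jacobiator of a family `F` of operations on `W` which may depend on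
the degrees of their arguments; the inner output of `F j` is homogeneous of degree
`1 + (sum of the degrees of its arguments)` since the structure maps have degree `+1`. -/
def jacobiatorD (k : Type*) [Field k] {W : Type*} [AddCommGroup W] [Module k W]
    (F : (b : ℕ) → (Fin b → ℤ) → (Fin b → W) → W)
    (n : ℕ) (d : Fin n → ℤ) (w : Fin n → W) : W :=
  ∑ j : Fin (n + 1), ∑ τ ∈ shuffles j.1 n,
    koszulSign k d τ •
      F (n - j.1 + 1)
        (Fin.cons
          (1 + ∑ p : Fin j.1, d (τ (Fin.castLE (Nat.lt_succ_iff.mp j.isLt) p)))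
          (fun p : Fin (n - j.1) => d (τ ⟨j.1 + p.1, by
            have h1 := p.isLt; have h2 := Nat.lt_succ_iff.mp j.isLt; omega⟩)))
        (Fin.cons
          (F j.1
            (fun p => d (τ (Fin.castLE (Nat.lt_succ_iff.mp j.isLt) p)))
            (fun p => w (τ (Fin.castLE (Nat.lt_succ_iff.mp j.isLt) p))))
          (fun p : Fin (n - j.1) => w (τ ⟨j.1 + p.1, by
            have h1 := p.isLt; have h2 := Nat.lt_succ_iff.mp j.isLt; omega⟩)))

/-- The structure maps of the combined `L∞`-algebra on `W = V[1] ⊕ 𝔞` (realized as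
`V × V`, an element of `W` of degree `n` being a pair `(x,a)` with `x ∈ V_{n+1}` and
`a ∈ 𝔞 ∩ V_n`), extended to arbitrary homogeneous tuples by multilinearity and graded
symmetry from the values `m₀ = P(Δ)`, `m₁(v[1],a) = (−[Δ,v][1], P(v) + P[Δ,a])`,
`m₂(v[1],w[1]) = (−1)^{|v|}[v,w][1]`,
`m_b(v[1],a₁,…,a_{b−1}) = P[⋯[[v,a₁],a₂],⋯,a_{b−1}]` and
`m_b(a₁,…,a_b) = P[⋯[[Δ,a₁],a₂],⋯,a_b]` (`b ≥ 2`), all other components being zero. -/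
def combMap (k : Type*) [Field k] {V : Type*} [AddCommGroup V] [Module k V]
    (bk : V →ₗ[k] V →ₗ[k] V) (P : V →ₗ[k] V) (Δ : V) :
    (b : ℕ) → (Fin b → ℤ) → (Fin b → V × V) → V × V
  | 0, _, _ => (0, P Δ)
  | 1, _, w => (-(bk Δ (w 0).1), P ((w 0).1) + P (bk Δ ((w 0).2)))
  | (b + 2), d, w =>
      ((if b = 0 then gsign k (d 0 + 1) • bk ((w 0).1) ((w 1).1) else 0),
        P (iterBr k bk Δ (b + 2) (fun p => (w p).2))
          + ∑ i : Fin (b + 2),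
              gsign k (d i * ∑ p ∈ Finset.univ.filter (fun p : Fin (b + 2) => p < i), d p) •
                P (iterBr k bk ((w i).1) (b + 1) (fun p => (w (i.succAbove p)).2)))

/-- Maurer–Cartan characterization for the combined `L∞`-algebra: for a
V-algebra `(V,[·,·],𝔞,P)`, a positive Maurer–Cartan element `Δ ∈ V₁`, an element
`Δ̃ ∈ V₁` and `a ∈ 𝔞₀` such that all iterated brackets with at least `N` occurrences of
`a` on `Δ` and `Δ̃` vanish (so the Maurer–Cartan sums are finite), the pair `(Δ̃[1], a)`
satisfies the Maurer–Cartan equation `Σ_b (1/b!) m_b((Δ̃[1],a),…,(Δ̃[1],a)) = 0` of the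
combined `L∞`-algebra on `V[1] ⊕ 𝔞` if and only if `[Δ+Δ̃, Δ+Δ̃] = 0` and `a` is a
Maurer–Cartan element of the `L∞`-algebra on `𝔞` given by the higher derived brackets of
`Δ+Δ̃`. -/
theorem combined_maurerCartan_characterization {k V : Type*} [Field k] [CharZero k]
    [AddCommGroup V] [Module k V] (L : ZGradedLieAlgebra k V)
    (𝔞 𝔟 : Submodule k V) (hcompl : IsCompl 𝔞 𝔟)
    (h𝔞gr : IsGradedSubspace L.grading 𝔞) (h𝔟gr : IsGradedSubspace L.grading 𝔟)
    (h𝔞ab : ∀ a ∈ 𝔞, ∀ a' ∈ 𝔞, L.bracket a a' = 0)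
    (h𝔟sub : ∀ x ∈ 𝔟, ∀ y ∈ 𝔟, L.bracket x y ∈ 𝔟)
    (P : V →ₗ[k] V) (hP𝔞 : ∀ x ∈ 𝔞, P x = x) (hP𝔟 : ∀ x ∈ 𝔟, P x = 0)
    (Δ : V) (hΔ : Δ ∈ L.grading 1) (hMC : L.bracket Δ Δ = 0)
    (Δt : V) (hΔt : Δt ∈ L.grading 1) (a : V) (ha : a ∈ 𝔞 ⊓ L.grading 0)
    (N : ℕ)
    (hnil : ∀ b : ℕ, N ≤ b → iterBr k L.bracket Δ b (fun _ => a) = 0)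
    (hnil' : ∀ b : ℕ, N ≤ b → iterBr k L.bracket Δt b (fun _ => a) = 0) :
    (∑ b ∈ Finset.range (N + 3), ((b.factorial : k))⁻¹ •
        combMap k L.bracket P Δ b (fun _ => 0) (fun _ => (Δt, a)) = 0) ↔
      (L.bracket (Δ + Δt) (Δ + Δt) = 0 ∧
        ∑ b ∈ Finset.range (N + 3), ((b.factorial : k))⁻¹ •
          P (iterBr k L.bracket (Δ + Δt) b (fun _ => a)) = 0) := by

  classical
  have gz : gsign k 0 = 1 := by simp [gsign]
  have go : gsign k 1 = -1 := by
    simp [gsign, Int.even_iff]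
  -- the bracket is additive in its head entry after iteration
  have iterAdd : ∀ (b : ℕ) (f : Fin b → V),
      iterBr k L.bracket (Δ + Δt) b f
        = iterBr k L.bracket Δ b f + iterBr k L.bracket Δt b f := by
    intro b
    induction b with
    | zero => intro f; rfl
    | succ n ih =>
      intro f
      simp [iterBr, ih]
  -- per-term first component
  have fstTerm : ∀ b : ℕ,
      (((b.factorial : k))⁻¹ •
        combMap k L.bracket P Δ b (fun _ => 0) (fun _ => (Δt, a))).1
      = (if b = 1 then -(L.bracket Δ Δt) else 0)
          + (if b = 2 then -((2 : k)⁻¹ • L.bracket Δt Δt) else 0) := by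
    intro b
    match b with
    | 0 => simp [combMap]
    | 1 => simp [combMap]
    | 2 =>
      simp [combMap, go, Nat.factorial]
    | (m+3) =>
      simp [combMap]
  -- per-term second component
  have sndTerm : ∀ b : ℕ,
      (((b.factorial : k))⁻¹ •
        combMap k L.bracket P Δ b (fun _ => 0) (fun _ => (Δt, a))).2
      = ((b.factorial : k))⁻¹ • P (iterBr k L.bracket Δ b (fun _ => a))
          + (if b = 0 then 0 else
              (((b-1).factorial : k))⁻¹ • P (iterBr k L.bracket Δt (b-1) (fun _ => a))) := by
    intro b
    match b with
    | 0 => simp [combMap, iterBr]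
    | 1 =>
      simp [combMap, iterBr, Nat.factorial]
      abel
    | (m+2) =>
      have harg : (fun p : Fin (m+2) => ((fun _ : Fin (m+2) => ((Δt : V), a)) p).2)
          = (fun _ : Fin (m+2) => a) := rfl
      simp only [combMap, Prod.smul_snd, harg]
      have hs : (∑ i : Fin (m+2),
          gsign k ((0:ℤ) * ∑ p ∈ Finset.univ.filter (fun p : Fin (m+2) => p < i), (0:ℤ)) •
            P (iterBr k L.bracket Δt (m+1) (fun _ => a)))
          = (m+2 : ℕ) • P (iterBr k L.bracket Δt (m+1) (fun _ => a)) := by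
        simp [gz]
      rw [hs, smul_add]
      have h1 : ((m+1).factorial : k) ≠ 0 :=
        Nat.cast_ne_zero.mpr (Nat.factorial_ne_zero _)
      have h2 : ((m+2 : ℕ) : k) ≠ 0 :=
        Nat.cast_ne_zero.mpr (by omega)
      have hfac : ((m+2).factorial : k) = ((m+2 : ℕ) : k) * ((m+1).factorial : k) := by
        rw [show m+2 = (m+1)+1 from rfl, Nat.factorial_succ]
        push_cast; ring
      have hco : ((m+2).factorial : k)⁻¹ •
            ((m+2 : ℕ) • P (iterBr k L.bracket Δt (m+1) (fun _ => a)))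
          = ((m+1).factorial : k)⁻¹ • P (iterBr k L.bracket Δt (m+1) (fun _ => a)) := by
        rw [← Nat.cast_smul_eq_nsmul k, smul_smul]
        congr 1
        rw [hfac, mul_inv, mul_right_comm, inv_mul_cancel₀ h2, one_mul]
      rw [hco]
      simp [Nat.factorial]
  -- split the sum componentwise
  have hiff0 : (∑ b ∈ Finset.range (N + 3), ((b.factorial : k))⁻¹ •
        combMap k L.bracket P Δ b (fun _ => 0) (fun _ => (Δt, a)) = 0)
      ↔ ((∑ b ∈ Finset.range (N + 3), ((b.factorial : k))⁻¹ •
            combMap k L.bracket P Δ b (fun _ => 0) (fun _ => (Δt, a))).1 = 0 ∧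
         (∑ b ∈ Finset.range (N + 3), ((b.factorial : k))⁻¹ •
            combMap k L.bracket P Δ b (fun _ => 0) (fun _ => (Δt, a))).2 = 0) := by
    constructor
    · intro h; rw [h]; exact ⟨rfl, rfl⟩
    · intro ⟨h1, h2⟩; exact Prod.ext h1 h2
  rw [hiff0]
  -- evaluate the first component
  have fstSum : (∑ b ∈ Finset.range (N + 3), ((b.factorial : k))⁻¹ •
        combMap k L.bracket P Δ b (fun _ => 0) (fun _ => (Δt, a))).1
      = -(L.bracket Δ Δt) + -((2 : k)⁻¹ • L.bracket Δt Δt) := by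
    rw [Prod.fst_sum]
    rw [Finset.sum_congr rfl (fun b _ => fstTerm b)]
    rw [Finset.sum_add_distrib]
    rw [Finset.sum_ite_eq' (Finset.range (N+3)) 1 (fun _ => -(L.bracket Δ Δt))]
    rw [Finset.sum_ite_eq' (Finset.range (N+3)) 2
      (fun _ => -((2 : k)⁻¹ • L.bracket Δt Δt))]
    simp
  -- evaluate the second component
  have sndSum : (∑ b ∈ Finset.range (N + 3), ((b.factorial : k))⁻¹ •
        combMap k L.bracket P Δ b (fun _ => 0) (fun _ => (Δt, a))).2
      = ∑ b ∈ Finset.range (N + 3), ((b.factorial : k))⁻¹ •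
          P (iterBr k L.bracket (Δ + Δt) b (fun _ => a)) := by
    rw [Prod.snd_sum]
    rw [Finset.sum_congr rfl (fun b _ => sndTerm b)]
    rw [Finset.sum_add_distrib]
    have hshift : (∑ b ∈ Finset.range (N + 3), (if b = 0 then 0 else
          (((b-1).factorial : k))⁻¹ • P (iterBr k L.bracket Δt (b-1) (fun _ => a))))
        = ∑ b ∈ Finset.range (N + 2),
            ((b.factorial : k))⁻¹ • P (iterBr k L.bracket Δt b (fun _ => a)) := by
      rw [Finset.sum_range_succ' _ (N+2)]
      simp
    rw [hshift]
    have hlast : ∑ b ∈ Finset.range (N + 2),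
          ((b.factorial : k))⁻¹ • P (iterBr k L.bracket Δt b (fun _ => a))
        = ∑ b ∈ Finset.range (N + 3),
            ((b.factorial : k))⁻¹ • P (iterBr k L.bracket Δt b (fun _ => a)) := by
      rw [Finset.sum_range_succ _ (N+2), hnil' (N+2) (by omega)]
      simp
    rw [hlast, ← Finset.sum_add_distrib]
    apply Finset.sum_congr rfl
    intro b _
    rw [iterAdd, map_add, smul_add]
  rw [fstSum, sndSum]
  -- first components agree
  have hanti : L.bracket Δt Δ = L.bracket Δ Δt := by
    have := L.bracket_antisymm 1 1 Δt Δ hΔt hΔ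
    rw [this]
    norm_num [go]
  have hexp : L.bracket (Δ + Δt) (Δ + Δt)
      = L.bracket Δ Δt + L.bracket Δ Δt + L.bracket Δt Δt := by
    simp [map_add, hMC, hanti]
    abel
  have h2 : (2 : k)⁻¹ + (2 : k)⁻¹ = 1 := by
    rw [← two_mul]
    exact mul_inv_cancel₀ two_ne_zero
  have hfst : -(L.bracket Δ Δt) + -((2 : k)⁻¹ • L.bracket Δt Δt)
      = -((2 : k)⁻¹ • L.bracket (Δ + Δt) (Δ + Δt)) := by
    rw [hexp, smul_add, smul_add, ← add_smul, h2, one_smul]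
    abel
  rw [hfst]
  have h2ne : ((2 : k)⁻¹ : k) ≠ 0 := inv_ne_zero two_ne_zero
  constructor
  · rintro ⟨h1, h2'⟩
    refine ⟨?_, h2'⟩
    have := neg_eq_zero.mp h1
    rcases smul_eq_zero.mp this with h | h
    · exact absurd h h2ne
    · exact h
  · rintro ⟨h1, h2'⟩
    exact ⟨by rw [h1, smul_zero, neg_zero], h2'⟩
end
end
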